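/- arXiv:2012.04942 — 2 statements merged into one kernel-verified Lean document; each statement's English description precedes it below -/
import Mathlib

section
/- Let {f_t : t ∈ T} ⊂ Γ₀(X) be a nonempty family, f := sup_{t∈T} f_t, x ∈ dom f, and ε > 0. Set T_ε⁺(x) := T_ε(x) ∪ {t ∈ T : f_t(x) ≥ 0}. Under the standard hypothesis (SH) one has N_{dom f}(x) = [ co‾( (⋃_{t∈T_ε⁺(x)} ∂_ε f_t(x)) ∪ (⋃_{t∈T\T_ε⁺(x), 0≤λ≤1} ∂_{ε+λ f_t(x)}(λ f_t)(x)) ) ]_∞, where (λ f_t)(z) := λ f_t(z) and 0·f_t is the indicator function I_{dom f_t} (value 0 on dom f_t, +∞ outside). -/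
open Set Pointwise Topology
open scoped Classical

noncomputable section

variable {X : Type*} [AddCommGroup X] [Module ℝ X] [TopologicalSpace X]
  [IsTopologicalAddGroup X] [ContinuousSMul ℝ X] [LocallyConvexSpace ℝ X] [T2Space X]

/-- Convexity for extended-real-valued functions. -/
def EConvexOn' (f : X → EReal) : Prop :=
  ∀ x y : X, ∀ a b : ℝ, 0 ≤ a → 0 ≤ b → a + b = 1 →
    f (a • x + b • y) ≤ (a : EReal) * f x + (b : EReal) * f y

/-- `f ∈ Γ₀(X)`: proper, convex and lower semicontinuous. -/
def Gamma0 (f : X → EReal) : Prop :=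
  (∀ x, f x ≠ ⊥) ∧ (∃ x, f x ≠ ⊤) ∧ EConvexOn' f ∧ LowerSemicontinuous f

/-- Effective domain of `f`. -/
def edom (f : X → EReal) : Set X := {x | f x ≠ ⊤}

/-- The ε-subdifferential of `f` at `x` (a subset of the weak* dual);
it is empty when `ε < 0` or `f x ∉ ℝ`. -/
def esubdiff (f : X → EReal) (x : X) (ε : ℝ) : Set (WeakDual ℝ X) :=
  {p | 0 ≤ ε ∧ f x ≠ ⊤ ∧ f x ≠ ⊥ ∧
    ∀ y : X, f x + ((p y - p x - ε : ℝ) : EReal) ≤ f y}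

/-- Normal cone to `A` at `x` (empty when `x ∉ A`). -/
def normalCone (A : Set X) (x : X) : Set (WeakDual ℝ X) :=
  {p | x ∈ A ∧ ∀ y ∈ A, p y - p x ≤ 0}

/-- Recession cone of a set. -/
def recCone {V : Type*} [AddCommMonoid V] [Module ℝ V] (C : Set V) : Set V :=
  {y | ∃ c ∈ C, ∀ l : ℝ, 0 ≤ l → c + l • y ∈ C}

/-- Closed convex hull of a set. -/
def cclo {V : Type*} [AddCommMonoid V] [Module ℝ V] [TopologicalSpace V] (S : Set V) : Set V :=
  closure (convexHull ℝ S)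

/-- `sMul l f` is the function `l·f`, with the convention `0·f = I_{dom f}`
(i.e. `(l·f) z = +∞` whenever `f z = +∞`). -/
def sMul (l : ℝ) (f : X → EReal) : X → EReal :=
  fun z => if f z = ⊤ then ⊤ else (l : EReal) * f z

/-!
For `y ∈ dom f` every generator `q` (an element of one of the subdifferentials in the union)
satisfies `q y - q x ≤ C_y` for a constant `C_y`; such a bound survives the closed convex hull,
so every recession direction `p` has `p y - p x ≤ 0`, i.e. `p` is normal to `dom f` at `x`.

Conversely let `p` be normal and `c` a generator (one exists because `T_ε(x) ≠ ∅`). If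
`c + l • p` left the closed convex hull, a weak* separation
would give `d ∈ X` with `p d > 0` and the generators bounded above at `d`. Normality puts the open
ray `x + (0, ∞) • d` outside `dom f`; upper semicontinuity in `t`, compactness of `T` and
convexity of the `dom f_t` then give a single `t` with `f_t = +∞` on the whole ray. Separating a
segment issuing from `(x, f_t x - ε)` from the epigraph of `f_t` produces `q ∈ ∂_ε f_t(x)` with
`q d` arbitrarily large, and when `t ∉ T_ε⁺(x)` the rescaling `l = ε / (ε - f_t x)` moves `l • q`
into `∂_{ε + l f_t(x)} (l f_t)(x)`, contradicting the bound.
-/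

section ExtendedConvex

variable {E : Type*} [AddCommGroup E] [Module ℝ E]

theorem EConvexOn'.convex_edom {g : E → EReal} (hg : EConvexOn' g) : Convex ℝ (edom g) := by
  intro y hy z hz a b ha hb hab
  refine ne_top_of_le_ne_top ?_ (hg y z a b ha hb hab)
  have hmul : ∀ {c : ℝ} {w : EReal}, 0 ≤ c → w ≠ ⊤ → (c : EReal) * w ≠ ⊤ := fun hc hw =>
    EReal.mul_ne_top _ _ |>.2 ⟨.inl (EReal.coe_ne_bot _), .inl (EReal.coe_nonneg.2 hc),
      .inl (EReal.coe_ne_top _), .inr hw⟩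
  exact EReal.add_ne_top (hmul ha hy) (hmul hb hz)

theorem EConvexOn'.apply_add_smul_eq_top {g : E → EReal} (hg : EConvexOn' g) {x d : E}
    (hx : g x ≠ ⊤) {σ s : ℝ} (hσ : 0 < σ) (hσs : σ ≤ s) (hσd : g (x + σ • d) = ⊤) :
    g (x + s • d) = ⊤ := by
  by_contra hsd
  have hs : 0 < s := hσ.trans_le hσs
  have hmem := hg.convex_edom.add_smul_mem hx (y := s • d) hsd
    ⟨div_nonneg hσ.le hs.le, (div_le_one hs).2 hσs⟩
  rw [smul_smul, div_mul_cancel₀ σ hs.ne'] at hmem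
  exact hmem hσd

theorem EConvexOn'.convex_epigraph {g : E → EReal} (hg : EConvexOn' g) :
    Convex ℝ {v : E × ℝ | g v.1 ≤ v.2} := by
  rintro ⟨y, r⟩ hy ⟨z, s⟩ hz a b ha hb hab
  calc g (a • y + b • z) ≤ (a : EReal) * g y + (b : EReal) * g z := hg y z a b ha hb hab
    _ ≤ (a : EReal) * r + (b : EReal) * s := by gcongr <;> assumption
    _ = ((a * r + b * s : ℝ) : EReal) := by push_cast; rfl

end ExtendedConvex

theorem LowerSemicontinuous.isClosed_realEpigraph {E : Type*} [TopologicalSpace E]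
    {g : E → EReal} (hg : LowerSemicontinuous g) : IsClosed {v : E × ℝ | g v.1 ≤ v.2} :=
  hg.isClosed_epigraph.preimage (continuous_id.prodMap continuous_coe_real_ereal)

theorem sMul_eq_coe {E : Type*} {g : E → EReal} {z : E} {r : ℝ} (hz : g z = r) (l : ℝ) :
    sMul l g z = ((l * r : ℝ) : EReal) := by
  simp [sMul, hz, EReal.coe_mul]

section Subdifferential

variable {E : Type*} [AddCommGroup E] [Module ℝ E] [TopologicalSpace E]

theorem mem_esubdiff_iff {g : E → EReal} {x : E} {a : ℝ} (hgx : g x = a) {δ : ℝ}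
    {q : WeakDual ℝ E} :
    q ∈ esubdiff g x δ ↔ 0 ≤ δ ∧ ∀ y (b : ℝ), g y ≤ b → a + (q y - q x - δ) ≤ b := by
  simp only [esubdiff, Set.mem_ofPred_eq, hgx, ne_eq, EReal.coe_ne_top, EReal.coe_ne_bot,
    not_false_eq_true, true_and, ← EReal.coe_add]
  refine and_congr_right fun _ => forall_congr' fun y => ⟨fun h b hb => ?_, fun h => ?_⟩
  · exact_mod_cast h.trans hb
  · exact EReal.le_of_forall_lt_iff_le.1 fun b hb => by exact_mod_cast h b hb.le

theorem smul_mem_esubdiff_sMul {g : E → EReal} {x : E} {η l : ℝ} (hl : 0 < l)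
    {q : WeakDual ℝ E} (hq : q ∈ esubdiff g x η) : l • q ∈ esubdiff (sMul l g) x (l * η) := by
  obtain ⟨a, ha⟩ : ∃ a : ℝ, g x = a := ⟨_, (EReal.coe_toReal hq.2.1 hq.2.2.1).symm⟩
  obtain ⟨hη, hq⟩ := (mem_esubdiff_iff ha).1 hq
  refine (mem_esubdiff_iff (sMul_eq_coe ha l)).2 ⟨mul_nonneg hl.le hη, fun y b hb => ?_⟩
  have hgy : g y ≠ ⊤ := fun h => by simp [sMul, h] at hb
  have hgy' : g y ≠ ⊥ := fun h => by
    linarith [hq y (a + (q y - q x - η) - 1) (by simp [h])]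
  obtain ⟨c, hc⟩ : ∃ c : ℝ, g y = c := ⟨_, (EReal.coe_toReal hgy hgy').symm⟩
  rw [sMul_eq_coe hc, EReal.coe_le_coe_iff] at hb
  have hlc := mul_le_mul_of_nonneg_left (hq y c hc.le) hl.le
  show l * a + (l * q y - l * q x - l * η) ≤ b
  linarith

end Subdifferential

section Separation

variable {E : Type*} [AddCommGroup E] [Module ℝ E] [TopologicalSpace E]
  [IsTopologicalAddGroup E] [ContinuousSMul ℝ E] [LocallyConvexSpace ℝ E]

/-- The subgradient comes from strictly separating the segment from `(x, g x - δ)` to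
`(x + d, g x - δ + γ)` from the epigraph of `g`. -/
theorem exists_mem_esubdiff_sub_lt_apply {g : E → EReal} (hg : EConvexOn' g)
    (hg' : LowerSemicontinuous g) {x : E} {a : ℝ} (hgx : g x = a) {δ : ℝ} (hδ : 0 < δ)
    (d : E) (γ : ℝ) (hseg : ∀ θ ∈ Ioc (0 : ℝ) 1, ((a - δ + θ * γ : ℝ) : EReal) < g (x + θ • d)) :
    ∃ q ∈ esubdiff g x δ, γ - δ < q d := by
  set P₀ : E × ℝ := (x, a - δ)
  set P₁ : E × ℝ := (x + d, a - δ + γ)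
  have hdisj : Disjoint (segment ℝ P₀ P₁) {v : E × ℝ | g v.1 ≤ v.2} := by
    rw [Set.disjoint_left, segment_eq_image']
    rintro _ ⟨θ, hθ, rfl⟩ hmem
    simp only [P₀, P₁, Set.mem_ofPred_eq, Prod.fst_add, Prod.snd_add, Prod.smul_fst,
      Prod.smul_snd, Prod.fst_sub, Prod.snd_sub, add_sub_cancel_left, smul_eq_mul] at hmem
    rcases hθ.1.eq_or_lt with rfl | hθ0
    · rw [zero_smul, add_zero, zero_mul, add_zero, hgx, EReal.coe_le_coe_iff] at hmem
      linarith
    · exact (hseg θ ⟨hθ0, hθ.2⟩).not_ge hmem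
  obtain ⟨F, u, v, hFseg, huv, hFepi⟩ := geometric_hahn_banach_compact_closed
    (convex_segment P₀ P₁) (by rw [segment_eq_image']; exact isCompact_Icc.image (by fun_prop))
    hg.convex_epigraph hg'.isClosed_realEpigraph hdisj
  set α : ℝ := F (0, 1)
  have hF : ∀ z (r : ℝ), F (z, r) = F (z, 0) + r * α := fun z r => by
    rw [← smul_eq_mul, ← map_smul, ← map_add]; simp
  have hepi : ∀ y (b : ℝ), g y ≤ b → v < F (y, 0) + b * α := fun y b hb =>
    hF y b ▸ hFepi (y, b) hb
  have hP₀ : F (x, 0) + (a - δ) * α < u := hF x _ ▸ hFseg P₀ (left_mem_segment ℝ P₀ P₁)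
  have hP₁ : F (x + d, 0) + (a - δ + γ) * α < u := hF _ _ ▸ hFseg P₁ (right_mem_segment ℝ P₀ P₁)
  have hPx := hepi x a hgx.le
  have hα : 0 < α := pos_of_mul_pos_right (by linarith : 0 < δ * α) hδ.le
  let q : WeakDual ℝ E := StrongDual.toWeakDual (-α⁻¹ • F.comp (ContinuousLinearMap.inl ℝ E ℝ))
  have hq : ∀ z, F (z, 0) = -α * q z := fun z => by
    change F (z, 0) = -α * (-α⁻¹ * F (z, 0))
    field_simp
  refine ⟨q, (mem_esubdiff_iff hgx).2 ⟨hδ.le, fun y b hb => ?_⟩, ?_⟩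
  · have hPy := hepi y b hb
    rw [hq] at hPy hP₀
    have : α * (a + (q y - q x - δ)) < α * b := by linarith
    exact (lt_of_mul_lt_mul_left this hα.le).le
  · have hxd : F (x + d, 0) = F (x, 0) + F (d, 0) := by rw [← map_add]; simp
    rw [hxd, hq d, hq x] at hP₁
    rw [hq x] at hPx
    have : α * (γ - δ) < α * q d := by linarith
    exact lt_of_mul_lt_mul_left this hα.le

theorem esubdiff_nonempty {g : E → EReal} (hg : EConvexOn' g) (hg' : LowerSemicontinuous g)
    {x : E} {a : ℝ} (hgx : g x = a) {δ : ℝ} (hδ : 0 < δ) : (esubdiff g x δ).Nonempty :=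
  let ⟨q, hq, _⟩ := exists_mem_esubdiff_sub_lt_apply hg hg' hgx hδ 0 0 fun θ _ => by
    rw [smul_zero, add_zero, mul_zero, add_zero, hgx, EReal.coe_lt_coe_iff]; linarith
  ⟨q, hq⟩

theorem exists_mem_esubdiff_lt_apply_of_eq_top {g : E → EReal} (hg : EConvexOn' g)
    (hg' : LowerSemicontinuous g) {x : E} {a : ℝ} (hgx : g x = a) {δ : ℝ} (hδ : 0 < δ) {d : E}
    (hray : ∀ s : ℝ, 0 < s → g (x + s • d) = ⊤) (u : ℝ) : ∃ q ∈ esubdiff g x δ, u < q d := by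
  obtain ⟨q, hq, hlt⟩ := exists_mem_esubdiff_sub_lt_apply hg hg' hgx hδ d (u + δ) fun θ hθ => by
    rw [hray θ hθ.1]; exact EReal.coe_lt_top _
  exact ⟨q, hq, by linarith⟩

end Separation

section RecessionCone

variable {E : Type*} [AddCommGroup E] [Module ℝ E] [TopologicalSpace E]

theorem exists_apply_lt_of_notMem_cclo {S : Set (WeakDual ℝ E)} {p : WeakDual ℝ E}
    (hp : p ∉ cclo S) : ∃ (d : E) (u : ℝ), (∀ q ∈ cclo S, q d ≤ u) ∧ u < p d := by
  have : LocallyConvexSpace ℝ (WeakDual ℝ E) :=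
    WeakBilin.locallyConvexSpace (B := topDualPairing ℝ E)
  obtain ⟨G, u, hG, hu⟩ := geometric_hahn_banach_closed_point
    (convex_convexHull ℝ S).closure isClosed_closure hp
  obtain ⟨d, rfl⟩ := LinearMap.dualEmbedding_surjective (topDualPairing ℝ E) G
  exact ⟨d, u, fun q hq => (hG q hq).le, hu⟩

theorem mem_recCone_cclo_of_forall_exists_lt {S : Set (WeakDual ℝ E)} {c p : WeakDual ℝ E}
    (hc : c ∈ cclo S) (hp : ∀ d : E, 0 < p d → ∀ u : ℝ, ∃ q ∈ S, u < q d) :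
    p ∈ recCone (cclo S) := by
  refine ⟨c, hc, fun l hl => by_contra fun hout => ?_⟩
  obtain ⟨d, u, hu, hlt⟩ := exists_apply_lt_of_notMem_cclo hout
  change u < c d + l * p d at hlt
  have hcd := hu c hc
  obtain ⟨q, hq, huq⟩ := hp d (pos_of_mul_pos_right (by linarith) hl) u
  exact (hu q (subset_closure (subset_convexHull ℝ S hq))).not_gt huq

theorem apply_nonpos_of_mem_recCone_cclo {S : Set (WeakDual ℝ E)} {z : E} {C : ℝ}
    (hS : ∀ q ∈ S, q z ≤ C) {p : WeakDual ℝ E} (hp : p ∈ recCone (cclo S)) : p z ≤ 0 := by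
  obtain ⟨c, -, hc⟩ := hp
  have hcclo : cclo S ⊆ {q | q z ≤ C} :=
    closure_minimal (convexHull_min hS (convex_halfSpace_le ⟨fun _ _ => rfl, fun _ _ => rfl⟩ C))
      (isClosed_le (WeakDual.eval_continuous z) continuous_const)
  have hcz : c z ≤ C := by simpa using hcclo (hc 0 le_rfl)
  by_contra! hpz
  have hbound := hcclo (hc ((C - c z + 1) / p z) (div_nonneg (by linarith) hpz.le))
  change c z + (C - c z + 1) / p z * p z ≤ C at hbound
  rw [div_mul_cancel₀ _ hpz.ne'] at hbound
  linarith

end RecessionCone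

theorem exists_forall_eq_top_of_iSup_eq_top {E T : Type*} [AddCommGroup E] [Module ℝ E]
    [TopologicalSpace T] [CompactSpace T] {f : T → E → EReal}
    (husc : ∀ z, UpperSemicontinuous fun t => f t z) (hconv : ∀ t, EConvexOn' (f t)) {x d : E}
    (hx : ∀ t, f t x ≠ ⊤) (hray : ∀ s : ℝ, 0 < s → ⨆ t, f t (x + s • d) = ⊤) :
    ∃ t, ∀ s : ℝ, 0 < s → f t (x + s • d) = ⊤ := by
  have : Nonempty T := by
    by_contra h
    rw [not_nonempty_iff] at h
    simpa using hray 1 one_pos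
  set K : ℕ → Set T := fun k => {t | f t (x + (1 / (k + 1) : ℝ) • d) = ⊤}
  have hK_closed : ∀ k, IsClosed (K k) := fun k => by
    simpa [K, Set.preimage, top_le_iff] using (husc (x + (1 / (k + 1) : ℝ) • d)).isClosed_preimage ⊤
  have hK_ne : ∀ k, (K k).Nonempty := fun k => by
    obtain ⟨t, -, ht⟩ := (husc (x + (1 / (k + 1) : ℝ) • d)).upperSemicontinuousOn univ
      |>.exists_isMaxOn univ_nonempty isCompact_univ
    refine ⟨t, top_le_iff.1 ?_⟩
    rw [← hray (1 / (k + 1)) (by positivity)]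
    exact iSup_le fun t' => isMaxOn_iff.1 ht t' (mem_univ t')
  have hK_anti : ∀ k, K (k + 1) ⊆ K k := fun k t ht =>
    (hconv t).apply_add_smul_eq_top (hx t) (by positivity)
      (one_div_le_one_div_of_le (by positivity) (by push_cast; linarith)) ht
  obtain ⟨t, ht⟩ := IsCompact.nonempty_iInter_of_sequence_nonempty_isCompact_isClosed K hK_anti
    hK_ne (hK_closed 0).isCompact hK_closed
  refine ⟨t, fun s hs => ?_⟩
  obtain ⟨k, hk⟩ := exists_nat_one_div_lt hs
  exact (hconv t).apply_add_smul_eq_top (hx t) (by positivity) hk.le (mem_iInter.1 ht k)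

section Family

variable {E T : Type*} [AddCommGroup E] [Module ℝ E] [TopologicalSpace E]

def activePlus (f : T → E → EReal) (x : E) (ε : ℝ) : Set T :=
  {t | (⨆ s, f s x) - (ε : EReal) ≤ f t x} ∪ {t | (0 : EReal) ≤ f t x}

def normalGenerators (f : T → E → EReal) (x : E) (ε : ℝ) : Set (WeakDual ℝ E) :=
  (⋃ t ∈ activePlus f x ε, esubdiff (f t) x ε) ∪
    ⋃ t ∈ (activePlus f x ε)ᶜ, ⋃ l ∈ Icc (0 : ℝ) 1,
      esubdiff (sMul l (f t)) x (ε + l * (f t x).toReal)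

variable {f : T → E → EReal} {x : E}

theorem coe_toReal_apply_of_mem_edom_iSup (hf : ∀ t, Gamma0 (f t))
    (hx : x ∈ edom fun z => ⨆ t, f t z) (t : T) : ((f t x).toReal : EReal) = f t x :=
  EReal.coe_toReal (ne_top_of_le_ne_top hx (le_iSup (fun t => f t x) t)) ((hf t).1 x)

theorem coe_toReal_iSup_of_mem_edom_iSup [Nonempty T] (hf : ∀ t, Gamma0 (f t))
    (hx : x ∈ edom fun z => ⨆ t, f t z) : ((⨆ t, f t x).toReal : EReal) = ⨆ t, f t x :=
  EReal.coe_toReal hx <|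
    ne_bot_of_le_ne_bot ((hf (Classical.arbitrary T)).1 x) (le_iSup (fun t => f t x) _)

theorem toReal_apply_le_toReal_iSup (hf : ∀ t, Gamma0 (f t))
    (hx : x ∈ edom fun z => ⨆ t, f t z) (t : T) : (f t x).toReal ≤ (⨆ t, f t x).toReal :=
  EReal.toReal_le_toReal (le_iSup (fun t => f t x) t) ((hf t).1 x) hx

theorem mem_activePlus_iff [Nonempty T] (hf : ∀ t, Gamma0 (f t))
    (hx : x ∈ edom fun z => ⨆ t, f t z) {ε : ℝ} {t : T} :
    t ∈ activePlus f x ε ↔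
      (⨆ s, f s x).toReal - ε ≤ (f t x).toReal ∨ 0 ≤ (f t x).toReal := by
  rw [activePlus, mem_union, mem_ofPred_eq, mem_ofPred_eq,
    ← coe_toReal_iSup_of_mem_edom_iSup hf hx, ← coe_toReal_apply_of_mem_edom_iSup hf hx t]
  norm_cast

theorem normalGenerators_nonempty [IsTopologicalAddGroup E] [ContinuousSMul ℝ E]
    [LocallyConvexSpace ℝ E] [Nonempty T] (hf : ∀ t, Gamma0 (f t))
    (hx : x ∈ edom fun z => ⨆ t, f t z) {ε : ℝ} (hε : 0 < ε) :
    (normalGenerators f x ε).Nonempty := by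
  set F := (⨆ t, f t x).toReal
  obtain ⟨t, ht⟩ : ∃ t, ((F - ε : ℝ) : EReal) < f t x := by
    rw [← lt_iSup_iff, ← coe_toReal_iSup_of_mem_edom_iSup hf hx, EReal.coe_lt_coe_iff]
    linarith
  have hta : t ∈ activePlus f x ε := by
    left
    rw [mem_ofPred_eq, ← coe_toReal_iSup_of_mem_edom_iSup hf hx, ← EReal.coe_sub]
    exact ht.le
  obtain ⟨q, hq⟩ := esubdiff_nonempty (hf t).2.2.1 (hf t).2.2.2
    (coe_toReal_apply_of_mem_edom_iSup hf hx t).symm hε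
  exact ⟨q, Or.inl (mem_biUnion hta hq)⟩

theorem exists_mem_normalGenerators_lt_apply [IsTopologicalAddGroup E] [ContinuousSMul ℝ E]
    [LocallyConvexSpace ℝ E] [TopologicalSpace T] [CompactSpace T] (hf : ∀ t, Gamma0 (f t))
    (husc : ∀ z, UpperSemicontinuous fun t => f t z) (hx : x ∈ edom fun z => ⨆ t, f t z)
    {ε : ℝ} (hε : 0 < ε) {d : E} (hray : ∀ s : ℝ, 0 < s → ⨆ t, f t (x + s • d) = ⊤) (u : ℝ) :
    ∃ q ∈ normalGenerators f x ε, u < q d := by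
  obtain ⟨t, ht⟩ := exists_forall_eq_top_of_iSup_eq_top husc (fun t => (hf t).2.2.1)
    (fun t => ne_top_of_le_ne_top hx (le_iSup (fun t => f t x) t)) hray
  have : Nonempty T := ⟨t⟩
  have hsub := exists_mem_esubdiff_lt_apply_of_eq_top (hf t).2.2.1 (hf t).2.2.2
    (coe_toReal_apply_of_mem_edom_iSup hf hx t).symm hε ht
  by_cases hta : t ∈ activePlus f x ε
  · obtain ⟨q, hq, hu⟩ := hsub u
    exact ⟨q, Or.inl (mem_biUnion hta hq), hu⟩
  set r := (f t x).toReal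
  have hr : r < 0 := by
    rw [mem_activePlus_iff hf hx, not_or, not_le, not_le] at hta
    exact hta.2
  -- `l * ε = ε + l * r` makes `l • ∂_ε f_t(x) ⊆ ∂_{ε + l r} (l f_t)(x)`.
  have hεr : 0 < ε - r := by linarith
  set l := ε / (ε - r)
  have hl : 0 < l := div_pos hε hεr
  have hl1 : l ≤ 1 := (div_le_one hεr).2 (by linarith)
  have hlε : l * ε = ε + l * r := by
    simp only [l]
    field_simp
    ring
  obtain ⟨q, hq, hu⟩ := hsub (u / l)
  refine ⟨l • q, Or.inr (mem_biUnion hta (mem_biUnion ⟨hl.le, hl1⟩ ?_)), ?_⟩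
  · rw [← hlε]
    exact smul_mem_esubdiff_sMul hl hq
  · exact (div_lt_iff₀' hl).1 hu

theorem exists_forall_mem_normalGenerators_apply_sub_le [Nonempty T] (hf : ∀ t, Gamma0 (f t))
    (hx : x ∈ edom fun z => ⨆ t, f t z) (ε : ℝ) {y : E} (hy : y ∈ edom fun z => ⨆ t, f t z) :
    ∃ C : ℝ, ∀ q ∈ normalGenerators f x ε, q y - q x ≤ C := by
  set F := (⨆ t, f t x).toReal
  set R := (⨆ t, f t y).toReal
  refine ⟨max R 0 + ε - min (F - ε) 0, fun q hq => ?_⟩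
  have hR := le_max_left R 0
  have hF := min_le_right (F - ε) 0
  rcases hq with hq | hq
  · obtain ⟨t, ht, hq⟩ := mem_iUnion₂.1 hq
    have hq := ((mem_esubdiff_iff (coe_toReal_apply_of_mem_edom_iSup hf hx t).symm).1 hq).2 y _
      (coe_toReal_apply_of_mem_edom_iSup hf hy t).ge
    have hty := toReal_apply_le_toReal_iSup hf hy t
    have htx : min (F - ε) 0 ≤ (f t x).toReal :=
      ((mem_activePlus_iff hf hx).1 ht).elim min_le_of_left_le min_le_of_right_le
    linarith
  · obtain ⟨t, -, hq⟩ := mem_iUnion₂.1 hq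
    obtain ⟨l, hl, hq⟩ := mem_iUnion₂.1 hq
    have hgx := sMul_eq_coe (coe_toReal_apply_of_mem_edom_iSup hf hx t).symm l
    have hgy := sMul_eq_coe (coe_toReal_apply_of_mem_edom_iSup hf hy t).symm l
    have hq := ((mem_esubdiff_iff hgx).1 hq).2 y _ hgy.le
    have hty := mul_le_mul_of_nonneg_left ((toReal_apply_le_toReal_iSup hf hy t).trans hR) hl.1
    have hlR := mul_le_of_le_one_left (le_max_right R 0) hl.2
    linarith

end Family

theorem notMem_of_mem_normalCone {E : Type*} [AddCommGroup E] [Module ℝ E] [TopologicalSpace E]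
    {A : Set E} {x d : E} {p : WeakDual ℝ E} (hp : p ∈ normalCone A x) (hd : 0 < p d) {s : ℝ}
    (hs : 0 < s) : x + s • d ∉ A := fun h => by
  have := hp.2 _ h
  rw [map_add, map_smul, smul_eq_mul] at this
  nlinarith [mul_pos hs hd]

theorem statement13_general {T : Type*} [TopologicalSpace T] [CompactSpace T] [Nonempty T]
    (f : T → X → EReal) (hf : ∀ t, Gamma0 (f t))
    (husc : ∀ z : X, UpperSemicontinuous fun t => f t z)
    (x : X) (hx : x ∈ edom (fun z => ⨆ t, f t z))
    (ε : ℝ) (hε : 0 < ε) :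
    normalCone (edom (fun z => ⨆ t, f t z)) x =
      recCone (cclo
        ((⋃ t ∈ {t : T | (⨆ s, f s x) - (ε : EReal) ≤ f t x} ∪ {t : T | (0 : EReal) ≤ f t x},
            esubdiff (f t) x ε) ∪
         (⋃ t ∈ ({t : T | (⨆ s, f s x) - (ε : EReal) ≤ f t x} ∪ {t : T | (0 : EReal) ≤ f t x})ᶜ,
            ⋃ l ∈ Icc (0 : ℝ) 1,
              esubdiff (sMul l (f t)) x (ε + l * (f t x).toReal)))) := by
  change _ = recCone (cclo (normalGenerators f x ε))
  ext p
  constructor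
  · intro hp
    obtain ⟨q₀, hq₀⟩ := normalGenerators_nonempty hf hx hε
    refine mem_recCone_cclo_of_forall_exists_lt (subset_closure (subset_convexHull ℝ _ hq₀))
      fun d hd => exists_mem_normalGenerators_lt_apply hf husc hx hε fun s hs => ?_
    exact not_not.1 (notMem_of_mem_normalCone hp hd hs)
  · intro hp
    refine ⟨hx, fun y hy => ?_⟩
    obtain ⟨C, hC⟩ := exists_forall_mem_normalGenerators_apply_sub_le hf hx ε hy
    rw [← map_sub]
    exact apply_nonpos_of_mem_recCone_cclo (fun q hq => (map_sub q y x).symm ▸ hC q hq) hp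

/-- Corollary `normalnew`, second formula: under (SH), with
`T_ε⁺(x) := T_ε(x) ∪ {t : f_t(x) ≥ 0}`,
`N_{dom f}(x) = [co‾((⋃_{t∈T_ε⁺(x)} ∂_ε f_t(x)) ∪ (⋃_{t∉T_ε⁺(x), 0≤λ≤1} ∂_{ε+λf_t(x)}(λf_t)(x)))]_∞`. -/
theorem statement13 {T : Type*} [TopologicalSpace T] [CompactSpace T] [T2Space T] [Nonempty T]
    (f : T → X → EReal) (hf : ∀ t, Gamma0 (f t))
    (husc : ∀ z : X, UpperSemicontinuous fun t => f t z)
    (x : X) (hx : x ∈ edom (fun z => ⨆ t, f t z))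
    (ε : ℝ) (hε : 0 < ε) :
    normalCone (edom (fun z => ⨆ t, f t z)) x =
      recCone (cclo
        ((⋃ t ∈ {t : T | (⨆ s, f s x) - (ε : EReal) ≤ f t x} ∪ {t : T | (0 : EReal) ≤ f t x},
            esubdiff (f t) x ε) ∪
         (⋃ t ∈ ({t : T | (⨆ s, f s x) - (ε : EReal) ≤ f t x} ∪ {t : T | (0 : EReal) ≤ f t x})ᶜ,
            ⋃ l ∈ Icc (0 : ℝ) 1,
              esubdiff (sMul l (f t)) x (ε + l * (f t x).toReal)))) :=
  statement13_general f hf husc x hx ε hε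
end
end

section
/- Let {f_t : t ∈ T} ⊂ Γ₀(X) be a nonempty family, f := sup_{t∈T} f_t, and x ∈ dom f. Assume the standard hypothesis (SH) holds and let 0 < ρ_t ≤ 1, t ∈ T, satisfy inf_{t∈T} ρ_t f_t(x) > −∞. Then ∂f(x) ⊂ ⋂_{ε>0} co‾( (⋃_{t∈T(x)} ∂_ε f_t(x)) ∪ (⋃_{t∈T\T(x)} ε·∂_ε(ρ_t f_t)(x)) ), where (ρ_t f_t)(z) := ρ_t f_t(z) and ε·S := {ε s : s ∈ S}. -/
/-!
Suppose `p ∈ ∂f(x)` lies outside the closed convex hull for some `ε > 0`. Since the continuous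
functionals on the weak* dual are evaluations, some `g ∈ X` separates strictly:
`q g < u < p g` on the hull. Every index `t` then has a neighbourhood on which
`f_s (x + δ g) ≤ f x + δ (p g - δ)` for all small `δ > 0`: for active `t`, because otherwise the
ray bound `f_t (x + l g) ≥ f x + l (p g) - ε` would produce an `ε`-subgradient `q` of `f_t` with
`q g > u`; for inactive `t`, because otherwise `f_t = +∞` along the ray and `∂_ε(ρ_t f_t)(x)`
would contain functionals with arbitrarily large value at `g`. Convexity along the ray and upper
semicontinuity in `t` spread the bound to a neighbourhood, compactness of `T` makes `δ` uniform,
and then `f (x + δ g) < f x + δ (p g)` contradicts `p ∈ ∂f(x)`.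
-/

open Set Pointwise Topology
open scoped Classical

noncomputable section

variable {X : Type*} [AddCommGroup X] [Module ℝ X] [TopologicalSpace X]
  [IsTopologicalAddGroup X] [ContinuousSMul ℝ X] [LocallyConvexSpace ℝ X] [T2Space X]

lemma EReal.coe_le_of_forall_le_coe {e : EReal} {c : ℝ} (h : ∀ μ : ℝ, e ≤ μ → c ≤ μ) :
    (c : EReal) ≤ e := by
  induction e using EReal.rec with
  | bot => linarith [h (c - 1) bot_le]
  | top => exact le_top
  | coe b => exact_mod_cast h b le_rfl

lemma EReal.coe_mul_add_coe_mul_le {u v : EReal} {A B a b : ℝ} (hu : u ≤ A) (hv : v ≤ B)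
    (ha : 0 ≤ a) (hb : 0 ≤ b) : (a : EReal) * u + (b : EReal) * v ≤ ((a * A + b * B : ℝ) : EReal) :=
  calc (a : EReal) * u + (b : EReal) * v ≤ (a : EReal) * A + (b : EReal) * B :=
        add_le_add (mul_le_mul_of_nonneg_left hu (by exact_mod_cast ha))
          (mul_le_mul_of_nonneg_left hv (by exact_mod_cast hb))
    _ = ((a * A + b * B : ℝ) : EReal) := by norm_cast

lemma CompactSpace.eventually_forall_of_forall_exists_mem_nhds {T α : Type*}
    [TopologicalSpace T] [CompactSpace T] {l : Filter α} {P : T → α → Prop}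
    (h : ∀ t, ∃ U ∈ 𝓝 t, ∀ᶠ a in l, ∀ s ∈ U, P s a) : ∀ᶠ a in l, ∀ s, P s a := by
  have key : ∀ᶠ a in l, ∀ s ∈ (univ : Set T), P s a := by
    refine isCompact_univ.induction_on (p := fun S => ∀ᶠ a in l, ∀ s ∈ S, P s a)
      (by simp) (fun S S' hSS' h => h.mono fun a ha s hs => ha s (hSS' hs))
      (fun S S' hS hS' => (hS.and hS').mono fun a ha s hs => hs.elim (ha.1 s) (ha.2 s))
      fun t _ => ?_
    simpa only [nhdsWithin_univ] using h t
  exact key.mono fun a ha s => ha s (mem_univ s)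

section Epigraph

variable {E : Type*}

def realEpigraph (h : E → EReal) : Set (E × ℝ) := {z | h z.1 ≤ z.2}

lemma LowerSemicontinuous.isClosed_realEpigraph_s14 [TopologicalSpace E] {h : E → EReal}
    (hh : LowerSemicontinuous h) : IsClosed (realEpigraph h) :=
  hh.isClosed_epigraph.preimage <|
    continuous_fst.prodMk (continuous_coe_real_ereal.comp continuous_snd)

variable [AddCommGroup E] [Module ℝ E]

lemma EConvexOn'.convex_realEpigraph {h : E → EReal} (hh : EConvexOn' h) :
    Convex ℝ (realEpigraph h) := by
  rintro ⟨y, μ⟩ hy ⟨y', μ'⟩ hy' a b ha hb hab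
  exact (hh y y' a b ha hb hab).trans (EReal.coe_mul_add_coe_mul_le hy hy' ha hb)

lemma EConvexOn'.apply_add_smul_le {h : E → EReal} (hh : EConvexOn' h) {x g : E}
    {l l₀ a b : ℝ} (hl₀ : 0 < l₀) (hl : 0 ≤ l) (hll₀ : l ≤ l₀) (ha : h x ≤ a)
    (hb : h (x + l₀ • g) ≤ b) : h (x + l • g) ≤ ((a + l * ((b - a) / l₀) : ℝ) : EReal) := by
  have hθ : 0 ≤ 1 - l / l₀ := sub_nonneg.2 ((div_le_one hl₀).2 hll₀)
  have hpt : (1 - l / l₀) • x + (l / l₀) • (x + l₀ • g) = x + l • g := by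
    rw [smul_add, smul_smul, div_mul_cancel₀ l hl₀.ne']
    module
  calc h (x + l • g) ≤ ((1 - l / l₀ : ℝ) : EReal) * h x + ((l / l₀ : ℝ) : EReal) * h (x + l₀ • g) :=
        hpt ▸ hh _ _ _ _ hθ (by positivity) (by ring)
    _ ≤ (((1 - l / l₀) * a + l / l₀ * b : ℝ) : EReal) :=
        EReal.coe_mul_add_coe_mul_le ha hb hθ (by positivity)
    _ = ((a + l * ((b - a) / l₀) : ℝ) : EReal) := by congr 1; field_simp; ring

end Epigraph

section ScalarMultiple

variable {E : Type*} {f : E → EReal} {y : E}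

lemma sMul_of_eq_coe {b : ℝ} (ρ : ℝ) (hb : f y = b) : sMul ρ f y = ((ρ * b : ℝ) : EReal) := by
  simp [sMul, hb]

lemma sMul_of_eq_top (ρ : ℝ) (hy : f y = ⊤) : sMul ρ f y = ⊤ :=
  if_pos hy

lemma sMul_le_coe_iff {ρ : ℝ} (hρ : 0 < ρ) (μ : ℝ) :
    sMul ρ f y ≤ μ ↔ f y ≤ ((ρ⁻¹ * μ : ℝ) : EReal) := by
  generalize hy : f y = e
  induction e using EReal.rec with
  | bot => simp [sMul, hy, EReal.coe_mul_bot_of_pos hρ]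
  | top => rw [sMul_of_eq_top ρ hy]; simp only [top_le_iff, EReal.coe_ne_top]
  | coe b =>
    rw [sMul_of_eq_coe ρ hy, EReal.coe_le_coe_iff, EReal.coe_le_coe_iff, ← div_eq_inv_mul,
      le_div_iff₀ hρ, mul_comm]

variable [AddCommGroup E] [Module ℝ E] [TopologicalSpace E]

lemma realEpigraph_sMul {ρ : ℝ} (hρ : 0 < ρ) :
    realEpigraph (sMul ρ f) =
      (ContinuousLinearMap.id ℝ E).prodMap (ρ⁻¹ • ContinuousLinearMap.id ℝ ℝ) ⁻¹'
        realEpigraph f := by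
  ext z
  simp [realEpigraph, sMul_le_coe_iff hρ]

lemma IsClosed.realEpigraph_sMul {ρ : ℝ} (hf : IsClosed (realEpigraph f)) (hρ : 0 < ρ) :
    IsClosed (realEpigraph (sMul ρ f)) := by
  rw [_root_.realEpigraph_sMul hρ]
  exact hf.preimage (ContinuousLinearMap.continuous _)

lemma Convex.realEpigraph_sMul {ρ : ℝ} (hf : Convex ℝ (realEpigraph f)) (hρ : 0 < ρ) :
    Convex ℝ (realEpigraph (sMul ρ f)) := by
  rw [_root_.realEpigraph_sMul hρ]
  exact hf.linear_preimage _

end ScalarMultiple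

section Subdifferential

variable {E : Type*} [AddCommGroup E] [Module ℝ E]

lemma disjoint_segment_realEpigraph {h : E → EReal} {x g : E} {a ε r c l : ℝ} (hxa : h x = a)
    (hε : 0 < ε) (hray : ∀ l : ℝ, 0 < l → ((a + l * r - ε : ℝ) : EReal) ≤ h (x + l • g))
    (hl : 0 < l) (hlrc : ε < l * (r - c)) :
    Disjoint (segment ℝ ((x, a - ε) : E × ℝ) (x + l • g, a + l * c)) (realEpigraph h) := by
  rw [Set.disjoint_left, segment_eq_image']
  rintro _ ⟨θ, ⟨hθ, -⟩, rfl⟩ hmem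
  simp only [realEpigraph, mem_ofPred_eq, Prod.fst_add, Prod.snd_add, Prod.smul_fst,
    Prod.smul_snd, Prod.fst_sub, Prod.snd_sub, add_sub_cancel_left, smul_eq_mul] at hmem
  rcases hθ.eq_or_lt with rfl | hθ
  · rw [zero_smul, add_zero, hxa, EReal.coe_le_coe_iff] at hmem
    linarith
  · rw [smul_smul] at hmem
    have hle := EReal.coe_le_coe_iff.1 ((hray _ (by positivity)).trans hmem)
    nlinarith

variable [TopologicalSpace E] [IsTopologicalAddGroup E] [ContinuousSMul ℝ E]
  [LocallyConvexSpace ℝ E]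

lemma exists_mem_esubdiff_lt_apply {h : E → EReal} (hC : IsClosed (realEpigraph h))
    (hV : Convex ℝ (realEpigraph h)) {x g : E} {a ε r c : ℝ} (hxa : h x = a) (hε : 0 < ε)
    (hray : ∀ l : ℝ, 0 < l → ((a + l * r - ε : ℝ) : EReal) ≤ h (x + l • g)) (hc : c < r) :
    ∃ q ∈ esubdiff h x ε, c < q g := by
  -- The hyperplane separating the epigraph from a segment starting just below `(x, a)` is
  -- non-vertical; its slope is the `ε`-subgradient.
  have hrc : 0 < r - c := sub_pos.2 hc
  set l := 2 * ε / (r - c)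
  have hlrc : l * (r - c) = 2 * ε := div_mul_cancel₀ _ hrc.ne'
  obtain ⟨Φ, u, v, hK, huv, hE⟩ := geometric_hahn_banach_compact_closed (convex_segment _ _)
    (by rw [segment_eq_image]; exact isCompact_Icc.image (by fun_prop)) hV hC
    (disjoint_segment_realEpigraph (c := c) (l := l) hxa hε hray (by positivity) (by linarith))
  set s := Φ (0, 1)
  set φ := Φ.comp (ContinuousLinearMap.inl ℝ E ℝ)
  have hΦ : ∀ y μ, Φ (y, μ) = φ y + μ * s := fun y μ => by
    rw [show ((y, μ) : E × ℝ) = (y, 0) + μ • (0, 1) by simp, map_add, map_smul, smul_eq_mul]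
    rfl
  have hP := hK _ (left_mem_segment ℝ _ _)
  have hQ := hK _ (right_mem_segment ℝ _ _)
  have hX := hE (x, a) (by simp [realEpigraph, hxa])
  rw [hΦ] at hP hQ hX
  rw [map_add, map_smul, smul_eq_mul] at hQ
  have hs : 0 < s := by nlinarith
  refine ⟨StrongDual.toWeakDual (-s⁻¹ • φ), ⟨hε.le, by simp [hxa], by simp [hxa], fun y => ?_⟩, ?_⟩
  · rw [hxa, ← EReal.coe_add]
    refine EReal.coe_le_of_forall_le_coe fun μ hμ => ?_
    have hy := hE (y, μ) hμ
    rw [hΦ] at hy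
    simp only [StrongDual.coe_toWeakDual, smul_apply, smul_eq_mul]
    field_simp
    nlinarith
  · simp only [StrongDual.coe_toWeakDual, smul_apply, smul_eq_mul]
    field_simp
    nlinarith

end Subdifferential

lemma WeakDual.exists_lt_apply_of_notMem {E : Type*} [AddCommGroup E] [Module ℝ E]
    [TopologicalSpace E] {C : Set (WeakDual ℝ E)} (hC : IsClosed C) (hV : Convex ℝ C)
    {p : WeakDual ℝ E} (hp : p ∉ C) : ∃ (g : E) (u : ℝ), (∀ q ∈ C, q g < u) ∧ u < p g := by
  have : LocallyConvexSpace ℝ (WeakDual ℝ E) := WeakBilin.locallyConvexSpace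
  obtain ⟨φ, u, hφC, hφp⟩ := geometric_hahn_banach_closed_point hV hC hp
  obtain ⟨g, rfl⟩ := LinearMap.dualEmbedding_surjective (topDualPairing ℝ E) φ
  exact ⟨g, u, hφC, hφp⟩

section LocalEstimates

variable {T E : Type*} [TopologicalSpace T] [AddCommGroup E] [Module ℝ E] {f : T → E → EReal}
  {x g : E} {F π l₀ : ℝ} {t : T}

lemma exists_nhds_eventually_le_of_lt (hconv : ∀ s, EConvexOn' (f s))
    (husc : ∀ z, UpperSemicontinuous fun s => f s z) (hF : ∀ s, f s x ≤ F) (hl₀ : 0 < l₀)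
    {b : ℝ} (hb : b < F + l₀ * π) (ht : f t (x + l₀ • g) < b) :
    ∃ U ∈ 𝓝 t, ∀ᶠ δ in 𝓝[>] 0, ∀ s ∈ U, f s (x + δ • g) ≤ ((F + δ * (π - δ) : ℝ) : EReal) := by
  refine ⟨{s | f s (x + l₀ • g) < b}, husc _ t b ht, ?_⟩
  have hslope : 0 < π - (b - F) / l₀ := by
    rw [sub_pos, div_lt_iff₀ hl₀]; linarith
  filter_upwards [eventually_nhdsWithin_of_eventually_nhds
    ((eventually_le_nhds hl₀).and (eventually_le_nhds hslope)), self_mem_nhdsWithin]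
    with δ ⟨hδl₀, hδπ⟩ hδ s hs
  calc f s (x + δ • g) ≤ ((F + δ * ((b - F) / l₀) : ℝ) : EReal) :=
        (hconv s).apply_add_smul_le hl₀ (le_of_lt hδ) hδl₀ (hF s) hs.le
    _ ≤ ((F + δ * (π - δ) : ℝ) : EReal) := by
        rw [EReal.coe_le_coe_iff]
        nlinarith [mem_Ioi.1 hδ]

lemma exists_nhds_eventually_le_of_ne_top (hconv : ∀ s, EConvexOn' (f s))
    (husc : ∀ z, UpperSemicontinuous fun s => f s z) (hl₀ : 0 < l₀) (htx : f t x < F)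
    (ht : f t (x + l₀ • g) ≠ ⊤) :
    ∃ U ∈ 𝓝 t, ∀ᶠ δ in 𝓝[>] 0, ∀ s ∈ U, f s (x + δ • g) ≤ ((F + δ * (π - δ) : ℝ) : EReal) := by
  obtain ⟨a, hta, haF⟩ := EReal.lt_iff_exists_real_btwn.1 htx
  obtain ⟨b, htb, -⟩ := EReal.lt_iff_exists_real_btwn.1 (lt_top_iff_ne_top.2 ht)
  refine ⟨{s | f s x < a} ∩ {s | f s (x + l₀ • g) < b},
    Filter.inter_mem (husc x t a hta) (husc _ t b htb), ?_⟩
  have hlim : ∀ᶠ δ in 𝓝 (0 : ℝ), a + δ * ((b - a) / l₀) < F + δ * (π - δ) :=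
    ContinuousAt.eventually_lt (by fun_prop) (by fun_prop) (by simpa using haF)
  filter_upwards [eventually_nhdsWithin_of_eventually_nhds (hlim.and (eventually_le_nhds hl₀)),
    self_mem_nhdsWithin] with δ ⟨hδF, hδl₀⟩ hδ s ⟨hsa, hsb⟩
  calc f s (x + δ • g) ≤ ((a + δ * ((b - a) / l₀) : ℝ) : EReal) :=
        (hconv s).apply_add_smul_le hl₀ (le_of_lt hδ) hδl₀ (le_of_lt hsa) (le_of_lt hsb)
    _ ≤ ((F + δ * (π - δ) : ℝ) : EReal) := EReal.coe_le_coe_iff.2 hδF.le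

end LocalEstimates

section Cases

variable {T E : Type*} [TopologicalSpace T] [AddCommGroup E] [Module ℝ E] [TopologicalSpace E]
  [IsTopologicalAddGroup E] [ContinuousSMul ℝ E] [LocallyConvexSpace ℝ E]
  {f : T → E → EReal} {x g : E} {F π ε u : ℝ} {t : T}

lemma exists_nhds_eventually_le_of_active (hf : ∀ s, Gamma0 (f s))
    (husc : ∀ z, UpperSemicontinuous fun s => f s z) (hF : ∀ s, f s x ≤ F) (ht : F ≤ f t x)
    (hε : 0 < ε) (hsub : ∀ q ∈ esubdiff (f t) x ε, q g < u) (hu : u < π) :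
    ∃ U ∈ 𝓝 t, ∀ᶠ δ in 𝓝[>] 0, ∀ s ∈ U, f s (x + δ • g) ≤ ((F + δ * (π - δ) : ℝ) : EReal) := by
  obtain ⟨-, -, hconv, hlsc⟩ := hf t
  obtain ⟨l₀, hl₀, hlt⟩ : ∃ l₀ > 0, f t (x + l₀ • g) < ((F + l₀ * π - ε : ℝ) : EReal) := by
    by_contra! hray
    obtain ⟨q, hq, hqg⟩ := exists_mem_esubdiff_lt_apply hlsc.isClosed_realEpigraph_s14
      hconv.convex_realEpigraph (le_antisymm (hF t) ht) hε hray hu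
    exact (hsub q hq).not_gt hqg
  exact exists_nhds_eventually_le_of_lt (fun s => (hf s).2.2.1) husc hF hl₀ (by linarith) hlt

lemma exists_nhds_eventually_le_of_inactive (hf : ∀ s, Gamma0 (f s))
    (husc : ∀ z, UpperSemicontinuous fun s => f s z) (ht : f t x < F) {ρ : ℝ} (hρ : 0 < ρ)
    (hε : 0 < ε) (hsub : ∀ q ∈ esubdiff (sMul ρ (f t)) x ε, ε * q g < u) :
    ∃ U ∈ 𝓝 t, ∀ᶠ δ in 𝓝[>] 0, ∀ s ∈ U, f s (x + δ • g) ≤ ((F + δ * (π - δ) : ℝ) : EReal) := by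
  obtain ⟨hbot, -, hconv, hlsc⟩ := hf t
  obtain ⟨b, hb⟩ : ∃ b : ℝ, f t x = b := ⟨_, (EReal.coe_toReal ht.ne_top (hbot x)).symm⟩
  obtain ⟨l₀, hl₀, hne⟩ : ∃ l₀ > (0 : ℝ), f t (x + l₀ • g) ≠ ⊤ := by
    by_contra! htop
    -- every slope is admissible along a ray on which `ρ f_t` is `+∞`
    obtain ⟨q, hq, hqg⟩ := exists_mem_esubdiff_lt_apply
      (hlsc.isClosed_realEpigraph_s14.realEpigraph_sMul hρ)
      (hconv.convex_realEpigraph.realEpigraph_sMul hρ) (sMul_of_eq_coe ρ hb) hε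
      (r := u / ε + 1) (fun l hl => by rw [sMul_of_eq_top ρ (htop l hl)]; exact le_top)
      (lt_add_one (u / ε))
    have := hsub q hq
    rw [div_lt_iff₀ hε] at hqg
    linarith
  exact exists_nhds_eventually_le_of_ne_top (fun s => (hf s).2.2.1) husc hl₀ ht hne

end Cases

theorem statement14_general {T : Type*} [TopologicalSpace T] [CompactSpace T]
    (f : T → X → EReal) (hf : ∀ t, Gamma0 (f t))
    (husc : ∀ z : X, UpperSemicontinuous fun t => f t z)
    (x : X)
    (ρ : T → ℝ) (hρ : ∀ t, 0 < ρ t ∧ ρ t ≤ 1) :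
    esubdiff (fun z => ⨆ t, f t z) x 0 ⊆
      ⋂ (ε : ℝ) (_ : 0 < ε), cclo
        ((⋃ t ∈ {t : T | (⨆ s, f s x) ≤ f t x}, esubdiff (f t) x ε) ∪
         (⋃ t ∈ {t : T | (⨆ s, f s x) ≤ f t x}ᶜ,
            ε • esubdiff (sMul (ρ t) (f t)) x ε)) := by
  rintro p ⟨-, hFtop, hFbot, hp⟩
  obtain ⟨F, hF⟩ : ∃ F : ℝ, (⨆ t, f t x) = F := ⟨_, (EReal.coe_toReal hFtop hFbot).symm⟩
  refine mem_iInter₂.2 fun ε hε => by_contra fun hpS => ?_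
  obtain ⟨g, u, hu, hup⟩ :=
    WeakDual.exists_lt_apply_of_notMem isClosed_closure (convex_convexHull ℝ _).closure hpS
  have hloc (t : T) : ∃ U ∈ 𝓝 t, ∀ᶠ δ in 𝓝[>] 0, ∀ s ∈ U,
      f s (x + δ • g) ≤ ((F + δ * (p g - δ) : ℝ) : EReal) := by
    by_cases ht : (⨆ s, f s x) ≤ f t x
    · exact exists_nhds_eventually_le_of_active hf husc (fun s => hF ▸ le_iSup (f · x) s)
        (hF ▸ ht) hε (fun q hq => hu q (subset_closure (subset_convexHull ℝ _
          (Or.inl (mem_biUnion ht hq))))) hup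
    · exact exists_nhds_eventually_le_of_inactive hf husc (hF ▸ not_le.1 ht) (hρ t).1 hε
        fun q hq => hu _ (subset_closure (subset_convexHull ℝ _
          (Or.inr (mem_biUnion ht (smul_mem_smul_set hq)))))
  obtain ⟨δ, hδ, hδpos⟩ :=
    ((CompactSpace.eventually_forall_of_forall_exists_mem_nhds hloc).and self_mem_nhdsWithin).exists
  have hlow := (hp (x + δ • g)).trans (iSup_le hδ)
  beta_reduce at hlow
  rw [hF, ← EReal.coe_add, EReal.coe_le_coe_iff, map_add, map_smul, smul_eq_mul] at hlow
  nlinarith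

/-- Theorem `t1`, inclusion: under (SH), with `0 < ρ_t ≤ 1` and
`inf_t ρ_t f_t(x) > −∞`,
`∂f(x) ⊂ ⋂_{ε>0} co‾((⋃_{t∈T(x)} ∂_ε f_t(x)) ∪ (⋃_{t∉T(x)} ε·∂_ε(ρ_t f_t)(x)))`. -/
theorem statement14 {T : Type*} [TopologicalSpace T] [CompactSpace T] [T2Space T] [Nonempty T]
    (f : T → X → EReal) (hf : ∀ t, Gamma0 (f t))
    (husc : ∀ z : X, UpperSemicontinuous fun t => f t z)
    (x : X) (hx : x ∈ edom (fun z => ⨆ t, f t z))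
    (ρ : T → ℝ) (hρ : ∀ t, 0 < ρ t ∧ ρ t ≤ 1)
    (hinf : (⊥ : EReal) < ⨅ t, sMul (ρ t) (f t) x) :
    esubdiff (fun z => ⨆ t, f t z) x 0 ⊆
      ⋂ (ε : ℝ) (_ : 0 < ε), cclo
        ((⋃ t ∈ {t : T | (⨆ s, f s x) ≤ f t x}, esubdiff (f t) x ε) ∪
         (⋃ t ∈ {t : T | (⨆ s, f s x) ≤ f t x}ᶜ,
            ε • esubdiff (sMul (ρ t) (f t)) x ε)) :=
  statement14_general f hf husc x ρ hρ
end
end
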